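/- arXiv:1405.6303 — 2 statements merged into one kernel-verified Lean document; each statement's English description precedes it below -/
import Mathlib

section
/- Every symmetric polynomial evaluated at the Jucys–Murphy elements J_1, ..., J_n lies in the center of the group algebra C[S_n]. -/
/-!
The center of `ℂ[S_n]` is the commutant of the adjacent transpositions `s_i = (i, i+1)`, which
generate `S_n`. The Jucys–Murphy elements commute pairwise, `s_i` commutes with `J_b` for
`b ≠ i, i+1`, and `s_i J_i = J_{i+1} s_i - 1`, `s_i J_{i+1} = J_i s_i + 1`; hence `s_i` commutes
with `J_i + J_{i+1}` and with `J_i J_{i+1}`. A polynomial invariant under exchanging `X_i` and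
`X_{i+1}` is a polynomial in `X_i + X_{i+1}`, `X_i X_{i+1}` and the remaining variables, so its
value at the Jucys–Murphy elements commutes with `s_i`.
-/

open Finset

/-- The Jucys–Murphy element `J_b = ∑_{a < b} (a b)` in the group algebra `ℂ[S_n]`. -/
noncomputable def JM (n : ℕ) (b : Fin n) : MonoidAlgebra ℂ (Equiv.Perm (Fin n)) :=
  ∑ a ∈ Finset.univ.filter (fun a => a < b), MonoidAlgebra.single (Equiv.swap a b) 1

/-- Evaluation of a multivariate polynomial at the (commuting) Jucys–Murphy elements,
defined monomial by monomial, with the product of the `J_b`'s taken in the order of `Fin n`. -/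
noncomputable def evalJM (n : ℕ) (G : MvPolynomial (Fin n) ℂ) :
    MonoidAlgebra ℂ (Equiv.Perm (Fin n)) :=
  ∑ d ∈ G.support, MvPolynomial.coeff d G •
    ((List.finRange n).map (fun b => JM n b ^ d b)).prod

namespace MvPolynomial

variable {R σ : Type*} [CommRing R]

variable (R) in
def swapInvariantGens (i j : σ) : Set (MvPolynomial σ R) :=
  {X i + X j, X i * X j} ∪ X '' {i, j}ᶜ

variable {i j : σ}

lemma X_add_X_mem_adjoin_swapInvariantGens :
    X i + X j ∈ Algebra.adjoin R (swapInvariantGens R i j) :=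
  Algebra.subset_adjoin (.inl (.inl rfl))

lemma X_mul_X_mem_adjoin_swapInvariantGens :
    X i * X j ∈ Algebra.adjoin R (swapInvariantGens R i j) :=
  Algebra.subset_adjoin (.inl (.inr rfl))

lemma X_pow_add_X_pow_mem_adjoin_swapInvariantGens (k : ℕ) :
    X i ^ k + X j ^ k ∈ Algebra.adjoin R (swapInvariantGens R i j) := by
  suffices ∀ k, X i ^ k + X j ^ k ∈ Algebra.adjoin R (swapInvariantGens R i j) ∧
      X i ^ (k + 1) + X j ^ (k + 1) ∈ Algebra.adjoin R (swapInvariantGens R i j) from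
    (this k).1
  intro k
  induction k with
  | zero =>
    rw [pow_zero, pow_zero, zero_add, pow_one, pow_one]
    exact ⟨add_mem (one_mem _) (one_mem _), X_add_X_mem_adjoin_swapInvariantGens⟩
  | succ k ih =>
    refine ⟨ih.2, ?_⟩
    have newton : (X i ^ (k + 2) + X j ^ (k + 2) : MvPolynomial σ R) =
        (X i + X j) * (X i ^ (k + 1) + X j ^ (k + 1)) - X i * X j * (X i ^ k + X j ^ k) := by
      ring
    rw [newton]
    exact sub_mem (mul_mem X_add_X_mem_adjoin_swapInvariantGens ih.2)
      (mul_mem X_mul_X_mem_adjoin_swapInvariantGens ih.1)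

lemma X_pow_mul_X_pow_add_mem_adjoin_swapInvariantGens (a b : ℕ) :
    X i ^ a * X j ^ b + X i ^ b * X j ^ a ∈
      Algebra.adjoin R (swapInvariantGens R i j) := by
  wlog hba : b ≤ a generalizing a b
  · rw [add_comm]
    exact this b a (le_of_not_ge hba)
  obtain ⟨c, rfl⟩ := Nat.exists_eq_add_of_le hba
  have factor : (X i ^ (b + c) * X j ^ b + X i ^ b * X j ^ (b + c) : MvPolynomial σ R) =
      (X i * X j) ^ b * (X i ^ c + X j ^ c) := by
    ring
  rw [factor]
  exact mul_mem (pow_mem X_mul_X_mem_adjoin_swapInvariantGens b)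
    (X_pow_add_X_pow_mem_adjoin_swapInvariantGens c)

/-- Generalising over the exponents lets a factor `X i` or `X j` of `p` be absorbed into them. -/
lemma X_pow_mul_X_pow_mul_add_rename_swap_mem_adjoin_swapInvariantGens [DecidableEq σ]
    (p : MvPolynomial σ R) (a b : ℕ) :
    X i ^ a * X j ^ b * p + X i ^ b * X j ^ a * rename (Equiv.swap i j) p ∈
      Algebra.adjoin R (swapInvariantGens R i j) := by
  induction p using MvPolynomial.induction_on generalizing a b with
  | C c =>
    have factor : X i ^ a * X j ^ b * C c + X i ^ b * X j ^ a * rename (Equiv.swap i j) (C c) =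
        C c * (X i ^ a * X j ^ b + X i ^ b * X j ^ a) := by
      rw [rename_C]
      ring
    rw [factor]
    exact mul_mem (Subalgebra.algebraMap_mem _ c)
      (X_pow_mul_X_pow_add_mem_adjoin_swapInvariantGens a b)
  | add p q hp hq =>
    rw [map_add]
    convert add_mem (hp a b) (hq a b) using 1
    ring
  | mul_X p k hp =>
    rw [map_mul, rename_X]
    rcases eq_or_ne k i with rfl | hki
    · rw [Equiv.swap_apply_left]
      convert hp (a + 1) b using 1
      ring
    rcases eq_or_ne k j with rfl | hkj
    · rw [Equiv.swap_apply_right]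
      convert hp a (b + 1) using 1
      ring
    rw [Equiv.swap_apply_of_ne_of_ne hki hkj]
    have hk : X k ∈ Algebra.adjoin R (swapInvariantGens R i j) :=
      Algebra.subset_adjoin (.inr ⟨k, by simp [hki, hkj], rfl⟩)
    convert mul_mem hk (hp a b) using 1
    ring

lemma mem_adjoin_swapInvariantGens_of_rename_swap_eq [DecidableEq σ] [Invertible (2 : R)]
    {p : MvPolynomial σ R} (hp : rename (Equiv.swap i j) p = p) :
    p ∈ Algebra.adjoin R (swapInvariantGens R i j) := by
  have hsum :=
    X_pow_mul_X_pow_mul_add_rename_swap_mem_adjoin_swapInvariantGens (i := i) (j := j) p 0 0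
  simp only [pow_zero, one_mul, hp, ← two_smul R p] at hsum
  simpa [smul_smul] using Subalgebra.smul_mem _ hsum (⅟2 : R)

end MvPolynomial

lemma Equiv.swap_apply_mem_iff {α : Type*} [DecidableEq α] {s : Set α} {u v : α}
    (h : u ∈ s ↔ v ∈ s) (a : α) : Equiv.swap u v a ∈ s ↔ a ∈ s := by
  rcases eq_or_ne a u with rfl | hau
  · rw [Equiv.swap_apply_left, h]
  rcases eq_or_ne a v with rfl | hav
  · rw [Equiv.swap_apply_right, h]
  · rw [Equiv.swap_apply_of_ne_of_ne hau hav]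

namespace MonoidAlgebra

lemma single_mul_sum_single {k G ι : Type*} [Semiring k] [Group G] (g : G) (t : Finset ι)
    (f : ι → G) :
    single g (1 : k) * ∑ a ∈ t, single (f a) 1 =
      (∑ a ∈ t, single (g * f a * g⁻¹) 1) * single g 1 := by
  rw [Finset.mul_sum, Finset.sum_mul]
  refine Finset.sum_congr rfl fun a _ => ?_
  rw [single_mul_single, single_mul_single, inv_mul_cancel_right, mul_one]

lemma mem_center_of_commute_single {k G : Type*} [CommSemiring k] [Monoid G] {S : Set G}
    (hS : Submonoid.closure S = ⊤) {x : MonoidAlgebra k G}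
    (hx : ∀ g ∈ S, Commute (single g (1 : k)) x) :
    x ∈ Subalgebra.center k (MonoidAlgebra k G) := by
  have hof : ∀ g, Commute (of k G g) x := by
    intro g
    induction (hS ▸ Submonoid.mem_top g : g ∈ Submonoid.closure S)
      using Submonoid.closure_induction with
    | mem g hg => exact hx g hg
    | one => rw [map_one]; exact Commute.one_left x
    | mul g h _ _ hg hh => rw [map_mul]; exact hg.mul_left hh
  rw [Subalgebra.mem_center_iff]
  intro y
  induction y using MonoidAlgebra.induction_on with
  | of g => exact (hof g).eq
  | add y z hy hz => rw [add_mul, mul_add, hy, hz]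
  | smul c y hy => rw [smul_mul_assoc, mul_smul_comm, hy]

lemma single_swap_mul_self {k α : Type*} [Semiring k] [DecidableEq α] (u v : α) :
    single (Equiv.swap u v) (1 : k) * single (Equiv.swap u v) 1 = 1 := by
  rw [single_mul_single, Equiv.swap_mul_self, mul_one, ← one_def]

lemma single_swap_mul_sum_single_swap {k α : Type*} [Semiring k] [DecidableEq α] {u v : α}
    {t : Finset α} (ht : ∀ p ∈ t, p ≠ u ∧ p ≠ v) :
    single (Equiv.swap u v) (1 : k) * ∑ p ∈ t, single (Equiv.swap p u) 1 =
      (∑ p ∈ t, single (Equiv.swap p v) 1) * single (Equiv.swap u v) 1 := by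
  rw [single_mul_sum_single]
  congr 1
  refine Finset.sum_congr rfl fun p hp => ?_
  rw [← Equiv.swap_apply_apply, Equiv.swap_apply_of_ne_of_ne (ht p hp).1 (ht p hp).2,
    Equiv.swap_apply_left]

end MonoidAlgebra

open MonoidAlgebra Equiv

variable {n : ℕ}

lemma JM_eq_sum_Iio (b : Fin n) : JM n b = ∑ a ∈ Iio b, single (swap a b) (1 : ℂ) := by
  rw [JM, filter_gt_eq_Iio]

lemma commute_single_swap_JM {u v b : Fin n} (hu : u ≠ b) (hv : v ≠ b) (huv : u < b ↔ v < b) :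
    Commute (single (swap u v) (1 : ℂ)) (JM n b) := by
  rw [JM_eq_sum_Iio, Commute, SemiconjBy, single_mul_sum_single]
  congr 1
  simp_rw [← swap_apply_apply, swap_apply_of_ne_of_ne hu.symm hv.symm]
  exact Finset.sum_equiv (swap u v)
    (fun a => by simpa using (swap_apply_mem_iff (s := Set.Iio b) huv a).symm) (fun _ _ => rfl)

lemma JM_commute (a b : Fin n) : Commute (JM n a) (JM n b) := by
  wlog hab : a < b generalizing a b
  · rcases (not_lt.1 hab).eq_or_lt with rfl | hba
    · exact Commute.refl _
    · exact (this b a hba).symm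
  rw [JM_eq_sum_Iio a]
  refine Commute.sum_left _ _ _ fun p hp => ?_
  have hpb : p < b := (mem_Iio.1 hp).trans hab
  exact commute_single_swap_JM hpb.ne hab.ne (iff_of_true hpb hab)

lemma JM_succ (i : Fin n) :
    JM (n + 1) i.succ =
      single (swap i.castSucc i.succ) 1 +
        ∑ p ∈ Iio i.castSucc, single (swap p i.succ) (1 : ℂ) := by
  have hIio : Iio i.succ = insert i.castSucc (Iio i.castSucc) := by
    ext a
    rw [mem_Iio, mem_insert, mem_Iio, ← Fin.le_castSucc_iff, le_iff_eq_or_lt]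
  rw [JM_eq_sum_Iio, hIio, sum_insert notMem_Iio_self]

lemma single_swap_mul_JM_castSucc (i : Fin n) :
    single (swap i.castSucc i.succ) (1 : ℂ) * JM (n + 1) i.castSucc =
      JM (n + 1) i.succ * single (swap i.castSucc i.succ) 1 - 1 := by
  have hne : ∀ p ∈ Iio i.castSucc, p ≠ i.castSucc ∧ p ≠ i.succ := fun p hp =>
    ⟨(mem_Iio.1 hp).ne, ((mem_Iio.1 hp).trans (Fin.castSucc_lt_succ)).ne⟩
  rw [JM_eq_sum_Iio, single_swap_mul_sum_single_swap hne, JM_succ, add_mul,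
    single_swap_mul_self, add_sub_cancel_left]

lemma single_swap_mul_JM_succ (i : Fin n) :
    single (swap i.castSucc i.succ) (1 : ℂ) * JM (n + 1) i.succ =
      JM (n + 1) i.castSucc * single (swap i.castSucc i.succ) 1 + 1 := by
  have hne : ∀ p ∈ Iio i.castSucc, p ≠ i.succ ∧ p ≠ i.castSucc := fun p hp =>
    ⟨((mem_Iio.1 hp).trans (Fin.castSucc_lt_succ)).ne, (mem_Iio.1 hp).ne⟩
  rw [JM_succ, mul_add, single_swap_mul_self, swap_comm, single_swap_mul_sum_single_swap hne,
    ← JM_eq_sum_Iio]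
  exact add_comm _ _

lemma commute_single_swap_JM_add_JM (i : Fin n) :
    Commute (single (swap i.castSucc i.succ) (1 : ℂ))
      (JM (n + 1) i.castSucc + JM (n + 1) i.succ) := by
  rw [Commute, SemiconjBy, mul_add, single_swap_mul_JM_castSucc, single_swap_mul_JM_succ, add_mul]
  abel

lemma commute_single_swap_JM_mul_JM (i : Fin n) :
    Commute (single (swap i.castSucc i.succ) (1 : ℂ))
      (JM (n + 1) i.castSucc * JM (n + 1) i.succ) := by
  rw [Commute, SemiconjBy, ← mul_assoc, single_swap_mul_JM_castSucc, sub_mul, mul_assoc,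
    single_swap_mul_JM_succ, mul_add, mul_one, one_mul, add_sub_cancel_right, ← mul_assoc,
    (JM_commute _ _).eq]

section Evaluation

instance (n : ℕ) : IsMulCommutative (Algebra.adjoin ℂ (Set.range (JM n))) :=
  Algebra.isMulCommutative_adjoin ℂ (by
    rintro _ ⟨a, rfl⟩ _ ⟨b, rfl⟩
    exact (JM_commute a b).eq)

open scoped IsMulCommutative

/-- `aeval` needs a commutative target, hence the detour through the subalgebra generated by
the pairwise commuting `J_b`. -/
noncomputable def evalJMAlgHom (n : ℕ) :
    MvPolynomial (Fin n) ℂ →ₐ[ℂ] MonoidAlgebra ℂ (Perm (Fin n)) :=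
  (Algebra.adjoin ℂ (Set.range (JM n))).val.comp
    (MvPolynomial.aeval fun b => ⟨JM n b, Algebra.subset_adjoin ⟨b, rfl⟩⟩)

lemma evalJMAlgHom_X (b : Fin n) : evalJMAlgHom n (MvPolynomial.X b) = JM n b := by
  simp [evalJMAlgHom]

lemma evalJM_eq_evalJMAlgHom (G : MvPolynomial (Fin n) ℂ) : evalJM n G = evalJMAlgHom n G := by
  rw [evalJM, evalJMAlgHom, AlgHom.comp_apply, MvPolynomial.aeval_def, MvPolynomial.eval₂_eq',
    map_sum]
  refine Finset.sum_congr rfl fun d _ => ?_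
  rw [map_mul, AlgHom.commutes, ← Algebra.smul_def, Fin.prod_univ_def, map_list_prod,
    List.map_map]
  rfl

end Evaluation

lemma commute_single_swap_evalJM {G : MvPolynomial (Fin (n + 1)) ℂ} (i : Fin n)
    (hG : MvPolynomial.rename (swap i.castSucc i.succ) G = G) :
    Commute (single (swap i.castSucc i.succ) (1 : ℂ)) (evalJM (n + 1) G) := by
  set s := single (swap i.castSucc i.succ) (1 : ℂ)
  have hgens : MvPolynomial.swapInvariantGens ℂ i.castSucc i.succ ⊆
      ((Subalgebra.centralizer ℂ {s}).comap (evalJMAlgHom (n + 1)) : Set _) := by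
    rintro _ ((rfl | rfl) | ⟨b, hb, rfl⟩) <;>
      simp only [SetLike.mem_coe, Subalgebra.mem_comap, Subalgebra.mem_centralizer_iff,
        Set.mem_singleton_iff, forall_eq, map_add, map_mul, evalJMAlgHom_X]
    · exact commute_single_swap_JM_add_JM i
    · exact commute_single_swap_JM_mul_JM i
    · simp only [Set.mem_compl_iff, Set.mem_insert_iff, Set.mem_singleton_iff, not_or] at hb
      refine commute_single_swap_JM (Ne.symm hb.1) (Ne.symm hb.2) ⟨fun h => ?_, ?_⟩
      · exact (Fin.castSucc_lt_iff_succ_le.1 h).lt_of_ne (Ne.symm hb.2)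
      · exact Fin.castSucc_lt_succ.trans
  rw [evalJM_eq_evalJMAlgHom]
  exact Subalgebra.mem_centralizer_iff ℂ |>.1
    (Algebra.adjoin_le hgens (MvPolynomial.mem_adjoin_swapInvariantGens_of_rename_swap_eq hG)) s rfl

/-- Every symmetric polynomial in the Jucys–Murphy elements lies in the center
of the group algebra `ℂ[S_n]`. -/
theorem symmetric_poly_jucysMurphy_mem_center (n : ℕ) (G : MvPolynomial (Fin n) ℂ)
    (hG : G.IsSymmetric) :
    evalJM n G ∈ Subalgebra.center ℂ (MonoidAlgebra ℂ (Equiv.Perm (Fin n))) := by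
  cases n with
  | zero =>
    refine mem_center_of_commute_single (S := ∅) (eq_top_iff.2 fun g _ => ?_) (by simp)
    rw [Subsingleton.elim g 1]
    exact one_mem _
  | succ m =>
    refine mem_center_of_commute_single (Perm.mclosure_swap_castSucc_succ m) ?_
    rintro _ ⟨i, rfl⟩
    exact commute_single_swap_evalJM i (hG _)
end

section
/- The k-th elementary symmetric polynomial in the Jucys–Murphy elements equals the sum of all permutations in S_n having exactly n − k cycles: e_k(J_1,...,J_n) = Σ_{μ ⊢ n, ℓ(μ) = n−k} C_μ. -/
open Finset

/-- The product `J_{b_1} J_{b_2} ⋯ J_{b_k}` over a subset `s = {b_1 < b_2 < ⋯ < b_k}`. -/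
noncomputable def JMprod (n : ℕ) (s : Finset (Fin n)) : MonoidAlgebra ℂ (Equiv.Perm (Fin n)) :=
  ((s.sort (· ≤ ·)).map (JM n)).prod

/-- The `k`-th elementary symmetric polynomial `e_k(J_1,…,J_n)` of the Jucys–Murphy
elements. -/
noncomputable def esymmJM (n k : ℕ) : MonoidAlgebra ℂ (Equiv.Perm (Fin n)) :=
  ∑ s ∈ (Finset.univ : Finset (Fin n)).powersetCard k, JMprod n s

/-- The total number of cycles of a permutation of `Fin n`, counting fixed points as
cycles of length `1`. -/
def cycleCount (n : ℕ) (g : Equiv.Perm (Fin n)) : ℕ :=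
  g.cycleType.card + (Finset.univ.filter (fun x => g x = x)).card

/-!
Let `permsBelow n m k` be the permutations supported on `finBelow n m = {0, …, m-1}` whose
support exceeds their number of nontrivial cycles by `k`; these are the ones with `n - k` cycles
in total. Induct on `m`: the recursion
`e_{k+1}(J_0, …, J_m) = e_{k+1}(J_0, …, J_{m-1}) + e_k(J_0, …, J_{m-1}) J_m` is matched by
splitting `permsBelow n (m+1) (k+1)` according to whether `m` is moved. A permutation `h` moving
`m` factors uniquely as `g * (a m)` with `g` fixing `m` and `a = h⁻¹ m < m`, and right
multiplication by `(a m)` either inserts `m` into the cycle of `a` or adds the new cycle `(a m)`;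
either way the defect grows by exactly one.
-/

namespace Equiv.Perm

variable {α : Type*} [DecidableEq α] [Fintype α] {g c : Perm α} {a b : α}

theorem support_mul_swap_of_apply_eq_self (hb : g b = b) (hab : a ≠ b) :
    (g * swap a b).support = insert b (insert a g.support) := by
  have hga : g a ≠ b := fun h => hab (g.injective (h.trans hb.symm))
  ext x
  by_cases hxb : x = b
  · subst hxb; simp [hga]
  by_cases hxa : x = a
  · subst hxa; simp [hb, hab, hab.symm]
  · simp [swap_apply_of_ne_of_ne hxa hxb, hxa, hxb]

/-- `c * swap a b = swap b (c a) * c` is the cycle whose list is that of `c` read from `c a`,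
with `b` put in front. -/
theorem IsCycle.mul_swap_of_apply_eq_self (hc : c.IsCycle) (hb : c b = b)
    (ha : a ∈ c.support) : (c * swap a b).IsCycle := by
  have hca : c a ∈ c.support := apply_mem_support.mpr ha
  obtain ⟨l, hl⟩ : ∃ l, toList c (c a) = c a :: l := by
    cases h : toList c (c a) with
    | nil => exact absurd (toList_eq_nil_iff.mp h) (not_not.mpr hca)
    | cons x l =>
      have h0 := toList_getElem_zero c (c a) hca
      simp only [h, List.getElem_cons_zero] at h0
      exact ⟨l, by rw [h0]⟩
  have hbl : b ∉ toList c (c a) := fun h =>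
    notMem_support.mpr hb (((mem_toList_iff.mp h).1.mem_support_iff).mp hca)
  have hform : c * swap a b = (b :: c a :: l).formPerm := by
    rw [List.formPerm_cons_cons, ← hl, formPerm_toList, hc.cycleOf_eq (mem_support.mp hca),
      mul_swap_eq_swap_mul, hb, swap_comm]
  rw [hform]
  refine List.isCycle_formPerm ?_ (by simp)
  rw [← hl]
  exact List.nodup_cons.mpr ⟨hbl, nodup_toList c (c a)⟩

theorem card_cycleType_mul_swap_of_mem_support (hb : g b = b) (ha : a ∈ g.support) :
    Multiset.card (g * swap a b).cycleType = Multiset.card g.cycleType := by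
  set c := g.cycleOf a
  have hab : a ≠ b := fun h => mem_support.mp ha (h ▸ hb)
  have hcg : c ∈ g.cycleFactorsFinset := cycleOf_mem_cycleFactorsFinset_iff.mpr ha
  have hcyc : c.IsCycle := isCycle_cycleOf g (mem_support.mp ha)
  have hac : a ∈ c.support := mem_support_cycleOf_iff.mpr ⟨SameCycle.refl _ _, ha⟩
  have hcb : c b = b :=
    notMem_support.mp fun h => notMem_support.mpr hb (support_cycleOf_le g a h)
  have hdisj : Disjoint (g * c⁻¹) c := disjoint_mul_inv_of_mem_cycleFactorsFinset hcg
  have hdisj' : Disjoint (g * c⁻¹) (c * swap a b) := by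
    have hcb' : c⁻¹ b = b := inv_eq_iff_eq.mpr hcb.symm
    rw [disjoint_iff_disjoint_support, support_mul_swap_of_apply_eq_self hcb hab,
      insert_eq_of_mem hac, disjoint_insert_right]
    exact ⟨by rw [notMem_support, mul_apply, hcb', hb], disjoint_iff_disjoint_support.mp hdisj⟩
  calc Multiset.card (g * swap a b).cycleType
      = Multiset.card (g * c⁻¹ * (c * swap a b)).cycleType := by simp [mul_assoc]
    _ = Multiset.card (g * c⁻¹ * c).cycleType := by
      rw [hdisj'.cycleType_mul, hdisj.cycleType_mul,
        (hcyc.mul_swap_of_apply_eq_self hcb hac).cycleType, hcyc.cycleType]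
      simp
    _ = Multiset.card g.cycleType := by rw [inv_mul_cancel_right]

theorem card_cycleType_mul_swap_of_notMem_support (hb : g b = b) (ha : a ∉ g.support)
    (hab : a ≠ b) :
    Multiset.card (g * swap a b).cycleType = Multiset.card g.cycleType + 1 := by
  have hd : g.Disjoint (swap a b) := by
    rw [disjoint_iff_disjoint_support, support_swap hab]
    simp [ha, hb]
  simp [hd.cycleType_mul, (isCycle_swap hab).cycleType]

theorem card_support_mul_swap_add_card_cycleType (hb : g b = b) (hab : a ≠ b) :
    #(g * swap a b).support + Multiset.card g.cycleType =
      Multiset.card (g * swap a b).cycleType + #g.support + 1 := by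
  have hbg : b ∉ g.support := notMem_support.mpr hb
  rw [support_mul_swap_of_apply_eq_self hb hab]
  by_cases ha : a ∈ g.support
  · rw [insert_eq_of_mem ha, card_insert_of_notMem hbg,
      card_cycleType_mul_swap_of_mem_support hb ha]
    ring
  · rw [card_insert_of_notMem (by simp [hab.symm, hbg]), card_insert_of_notMem ha,
      card_cycleType_mul_swap_of_notMem_support hb ha hab]
    ring

theorem card_support_eq_card_cycleType_iff :
    #g.support = Multiset.card g.cycleType ↔ g = 1 := by
  refine ⟨fun h => card_cycleType_eq_zero.mp ?_, by rintro rfl; simp⟩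
  have := Multiset.card_nsmul_le_sum fun _ => two_le_of_mem_cycleType (σ := g)
  rw [sum_cycleType, smul_eq_mul] at this
  omega

end Equiv.Perm

open Equiv Equiv.Perm

theorem JMprod_insert_of_forall_lt {n : ℕ} {s : Finset (Fin n)} {b : Fin n}
    (hlt : ∀ x ∈ s, x < b) : JMprod n (insert b s) = JMprod n s * JM n b := by
  have hbs : b ∉ s := fun h => lt_irrefl b (hlt b h)
  have hperm : List.Perm ((insert b s).sort (· ≤ ·)) (s.sort (· ≤ ·) ++ [b]) := by
    refine Multiset.coe_eq_coe.mp ?_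
    rw [Multiset.coe_eq_coe.mpr (List.perm_append_singleton _ _), ← Multiset.cons_coe, sort_eq,
      sort_eq, insert_val_of_notMem hbs]
  have hsorted : (s.sort (· ≤ ·) ++ [b]).Pairwise (· ≤ ·) :=
    List.pairwise_append.mpr ⟨s.pairwise_sort _, List.pairwise_singleton _ _,
      fun x hx y hy => (List.mem_singleton.mp hy) ▸ (hlt x ((mem_sort _).mp hx)).le⟩
  rw [JMprod, JMprod, hperm.eq_of_pairwise' ((insert b s).pairwise_sort _) hsorted]
  simp

def finBelow (n m : ℕ) : Finset (Fin n) := univ.filter fun b => (b : ℕ) < m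

@[simp] theorem mem_finBelow {n m : ℕ} {x : Fin n} : x ∈ finBelow n m ↔ (x : ℕ) < m := by
  simp [finBelow]

theorem finBelow_succ {n : ℕ} (b : Fin n) : finBelow n (b + 1) = insert b (finBelow n b) := by
  ext x
  simp only [mem_finBelow, mem_insert, Fin.ext_iff]
  omega

def permsBelow (n m k : ℕ) : Finset (Perm (Fin n)) :=
  univ.filter fun g => g.support ⊆ finBelow n m ∧ #g.support = Multiset.card g.cycleType + k

theorem mem_permsBelow {n m k : ℕ} {g : Perm (Fin n)} :
    g ∈ permsBelow n m k ↔
      g.support ⊆ finBelow n m ∧ #g.support = Multiset.card g.cycleType + k := by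
  simp [permsBelow]

theorem permsBelow_zero (n m : ℕ) : permsBelow n m 0 = {1} := by
  ext g
  simp only [mem_permsBelow, add_zero, card_support_eq_card_cycleType_iff, mem_singleton]
  exact ⟨And.right, by rintro rfl; simp⟩

theorem apply_eq_self_of_mem_permsBelow {n k : ℕ} {g : Perm (Fin n)} {b : Fin n}
    (hg : g ∈ permsBelow n b k) : g b = b :=
  notMem_support.mp fun h => lt_irrefl _ (mem_finBelow.mp ((mem_permsBelow.mp hg).1 h))

theorem mul_swap_mem_permsBelow_succ_iff {n k : ℕ} {g : Perm (Fin n)} {a b : Fin n}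
    (hb : g b = b) (hab : a ≠ b) :
    g * swap a b ∈ permsBelow n (b + 1) (k + 1) ↔ g ∈ permsBelow n b k ∧ a < b := by
  have hbg : b ∉ insert a g.support := by simp [hab.symm, hb]
  have hcard : #(g * swap a b).support = Multiset.card (g * swap a b).cycleType + (k + 1) ↔
      #g.support = Multiset.card g.cycleType + k := by
    have := card_support_mul_swap_add_card_cycleType hb hab
    omega
  rw [mem_permsBelow, hcard, mem_permsBelow, support_mul_swap_of_apply_eq_self hb hab,
    finBelow_succ, insert_subset_insert_iff hbg, insert_subset_iff, mem_finBelow, ← Fin.lt_def]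
  tauto

theorem sum_JMprod_powersetCard_finBelow_succ {n : ℕ} (b : Fin n) (k : ℕ) :
    ∑ s ∈ (finBelow n (b + 1)).powersetCard (k + 1), JMprod n s =
      ∑ s ∈ (finBelow n b).powersetCard (k + 1), JMprod n s +
        (∑ s ∈ (finBelow n b).powersetCard k, JMprod n s) * JM n b := by
  have hb : b ∉ finBelow n b := by simp
  have hbs : ∀ s ∈ (finBelow n b).powersetCard k, b ∉ s := fun s hs h =>
    hb ((mem_powersetCard.mp hs).1 h)
  rw [finBelow_succ, powersetCard_succ_insert hb, sum_union, sum_image, sum_mul]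
  · congr 1
    refine sum_congr rfl fun s hs => JMprod_insert_of_forall_lt fun x hx => ?_
    exact Fin.lt_def.mpr (mem_finBelow.mp ((mem_powersetCard.mp hs).1 hx))
  · intro s hs t ht hst
    rw [← erase_insert (hbs s hs), ← erase_insert (hbs t ht), hst]
  · refine disjoint_left.mpr fun s hs hs' => ?_
    obtain ⟨t, -, rfl⟩ := mem_image.mp hs'
    exact hb ((mem_powersetCard.mp hs).1 (mem_insert_self b t))

theorem sum_permsBelow_succ {n : ℕ} (b : Fin n) (k : ℕ) :
    ∑ g ∈ permsBelow n (b + 1) (k + 1), MonoidAlgebra.single g (1 : ℂ) =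
      ∑ g ∈ permsBelow n b (k + 1), MonoidAlgebra.single g 1 +
        (∑ g ∈ permsBelow n b k, MonoidAlgebra.single g 1) * JM n b := by
  have hfix : {g ∈ permsBelow n (b + 1) (k + 1) | b ∉ g.support} = permsBelow n b (k + 1) := by
    ext g
    simp only [mem_filter, mem_permsBelow, finBelow_succ]
    constructor
    · rintro ⟨⟨hsub, hcard⟩, hbg⟩
      exact ⟨(subset_insert_iff_of_notMem hbg).mp hsub, hcard⟩
    · rintro ⟨hsub, hcard⟩
      exact ⟨⟨hsub.trans (subset_insert _ _), hcard⟩, fun h => by simpa using hsub h⟩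
  rw [← sum_filter_not_add_sum_filter _ fun g => b ∈ g.support, hfix, JM, sum_mul_sum,
    ← sum_product']
  simp only [MonoidAlgebra.single_mul_single, one_mul]
  congr 1
  refine (sum_nbij' (fun h : Perm (Fin n) => (h * swap (h⁻¹ b) b, h⁻¹ b))
    (fun p : Perm (Fin n) × Fin n => p.1 * swap p.2 b)
    ?_ ?_ ?_ ?_ fun h _ => by rw [mul_swap_mul_self])
  · intro h hh
    obtain ⟨hh, hbh⟩ := mem_filter.mp hh
    have hab : h⁻¹ b ≠ b := mem_support.mp (by rwa [support_inv])
    have hgb : (h * swap (h⁻¹ b) b) b = b := by simp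
    have := (mul_swap_mem_permsBelow_succ_iff hgb hab).mp (by rwa [mul_swap_mul_self])
    exact mem_product.mpr ⟨this.1, mem_filter.mpr ⟨mem_univ _, this.2⟩⟩
  · rintro ⟨g, a⟩ hp
    obtain ⟨hg, ha⟩ := mem_product.mp hp
    have hab : a < b := (mem_filter.mp ha).2
    have hgb := apply_eq_self_of_mem_permsBelow hg
    refine mem_filter.mpr ⟨(mul_swap_mem_permsBelow_succ_iff hgb hab.ne).mpr ⟨hg, hab⟩, ?_⟩
    rw [support_mul_swap_of_apply_eq_self hgb hab.ne]
    exact mem_insert_self _ _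
  · intro h _
    exact mul_swap_mul_self _ _ h
  · rintro ⟨g, a⟩ hp
    have hgb : g⁻¹ b = b :=
      inv_eq_iff_eq.mpr (apply_eq_self_of_mem_permsBelow (mem_product.mp hp).1).symm
    have ha : (g * swap a b)⁻¹ b = a := by
      rw [mul_inv_rev, swap_inv, mul_apply, hgb, swap_apply_right]
    simp only [ha, mul_swap_mul_self]

theorem sum_JMprod_powersetCard_finBelow {n m : ℕ} (hm : m ≤ n) (k : ℕ) :
    ∑ s ∈ (finBelow n m).powersetCard k, JMprod n s =
      ∑ g ∈ permsBelow n m k, MonoidAlgebra.single g 1 := by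
  induction m generalizing k with
  | zero =>
    rcases k with _ | k
    · simp [permsBelow_zero, JMprod, MonoidAlgebra.one_def]
    · have hempty : finBelow n 0 = ∅ := by ext; simp
      have hperms : permsBelow n 0 (k + 1) = ∅ := eq_empty_of_forall_notMem fun g hg => by
        obtain ⟨hsub, hcard⟩ := mem_permsBelow.mp hg
        rw [hempty, subset_empty, support_eq_empty_iff] at hsub
        simp [hsub] at hcard
      rw [hempty, hperms, powersetCard_eq_empty.mpr (by simp), sum_empty, sum_empty]
  | succ m ih =>
    rcases k with _ | k
    · simp [permsBelow_zero, JMprod, MonoidAlgebra.one_def]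
    · let b : Fin n := ⟨m, hm⟩
      rw [show m = b from rfl, sum_JMprod_powersetCard_finBelow_succ, sum_permsBelow_succ,
        ih (by omega), ih (by omega)]

theorem cycleCount_eq_card_cycleType_add (n : ℕ) (g : Perm (Fin n)) :
    cycleCount n g = Multiset.card g.cycleType + (n - #g.support) := by
  have hfix : univ.filter (fun x => g x = x) = g.supportᶜ := by ext; simp
  rw [cycleCount, hfix, card_compl, Fintype.card_fin]

theorem finBelow_self (n : ℕ) : finBelow n n = univ := by ext; simp

theorem permsBelow_self {n k : ℕ} (hk : k ≤ n) :
    permsBelow n n k = univ.filter fun g => cycleCount n g = n - k := by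
  ext g
  have := card_le_univ g.support
  simp only [mem_permsBelow, finBelow_self, subset_univ, true_and, mem_filter, mem_univ,
    cycleCount_eq_card_cycleType_add, Fintype.card_fin] at this ⊢
  omega

/-- `e_k(J_1,…,J_n) = ∑_{μ ⊢ n, ℓ(μ) = n-k} C_μ`: the `k`-th elementary symmetric
polynomial in the Jucys–Murphy elements is the sum of all permutations of `S_n` having
exactly `n - k` cycles. -/
theorem esymmJM_eq_sum_cycleCount (n k : ℕ) (hk : k ≤ n) :
    esymmJM n k =
      ∑ g ∈ Finset.univ.filter (fun g : Equiv.Perm (Fin n) => cycleCount n g = n - k),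
        MonoidAlgebra.single g 1 := by
  rw [esymmJM, ← finBelow_self, sum_JMprod_powersetCard_finBelow le_rfl, permsBelow_self hk]
end
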